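/- arXiv:2302.10181 — 3 statements merged into one kernel-verified Lean document; each statement's English description precedes it below -/
import Mathlib

section
/- Let ℓ be differentiable with L-Lipschitz gradient and ∇ℓ(w) ≠ 0. Then the single-step ascent point w + ρ·∇ℓ(w)/‖∇ℓ(w)‖ achieves a loss within Lρ² of the maximum of ℓ over the closed ball of radius ρ around w: max_{‖δ‖≤ρ} ℓ(w+δ) − ℓ(w + ρ∇ℓ(w)/‖∇ℓ(w)‖) ≤ L ρ². -/
/-!
The descent lemma `|ℓ (x + v) - ℓ x - ⟪∇ℓ x, v⟫| ≤ L/2 ‖v‖²` sandwiches `ℓ (w + δ)` between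
`ℓ w + ⟪∇ℓ w, δ⟫ ∓ L/2 ρ²` on the ball `‖δ‖ ≤ ρ`. The linear term is largest at the ascent step
`δ = ρ ∇ℓ w / ‖∇ℓ w‖`, so the upper bound anywhere on the ball exceeds the lower bound at the
ascent point by at most `L ρ²`.
-/

open Metric Set RealInnerProductSpace

theorem norm_smul_inv_norm_smul_le {F : Type*} [NormedAddCommGroup F] [NormedSpace ℝ F] (g : F)
    {ρ : ℝ} (hρ : 0 ≤ ρ) : ‖ρ • (‖g‖⁻¹ • g)‖ ≤ ρ := by
  rw [norm_smul, norm_smul, norm_inv, norm_norm, Real.norm_of_nonneg hρ]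
  exact mul_le_of_le_one_right hρ (inv_mul_le_one_of_le₀ le_rfl (norm_nonneg g))

section InnerProductSpace

variable {E : Type*} [NormedAddCommGroup E] [InnerProductSpace ℝ E]

theorem real_inner_le_inner_smul_inv_norm_smul (g : E) {δ : E} {ρ : ℝ} (hδ : ‖δ‖ ≤ ρ) :
    ⟪g, δ⟫ ≤ ⟪g, ρ • (‖g‖⁻¹ • g)⟫ := by
  have hg : ‖g‖⁻¹ * ‖g‖ ^ 2 = ‖g‖ := by
    rcases eq_or_ne ‖g‖ 0 with h | h
    · simp [h]
    · field_simp
  rw [real_inner_smul_right, real_inner_smul_right, real_inner_self_eq_norm_sq, hg, mul_comm]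
  exact (real_inner_le_norm g δ).trans (by gcongr)

variable [CompleteSpace E] {f : E → ℝ}

theorem hasDerivAt_comp_add_smul (hf : Differentiable ℝ f) (x v : E) (t : ℝ) :
    HasDerivAt (fun s : ℝ => f (x + s • v)) ⟪gradient f (x + t • v), v⟫ t := by
  have hline : HasDerivAt (fun s : ℝ => x + s • v) v t := by
    simpa using ((hasDerivAt_id t).smul_const v).const_add x
  exact (hf _).hasGradientAt.hasFDerivAt.comp_hasDerivAt t hline

theorem abs_sub_sub_inner_gradient_le {L : NNReal} (hf : Differentiable ℝ f)
    (hL : LipschitzWith L (gradient f)) (x v : E) :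
    |f (x + v) - f x - ⟪gradient f x, v⟫| ≤ L / 2 * ‖v‖ ^ 2 := by
  have hderiv : ∀ t : ℝ, HasDerivAt (fun s : ℝ => f (x + s • v) - f x - s * ⟪gradient f x, v⟫)
      (⟪gradient f (x + t • v), v⟫ - ⟪gradient f x, v⟫) t := fun t =>
    ((hasDerivAt_comp_add_smul hf x v t).sub_const (f x)).sub
      (hasDerivAt_mul_const ⟪gradient f x, v⟫)
  have hbound : ∀ t ∈ Ico (0 : ℝ) 1,
      ‖⟪gradient f (x + t • v), v⟫ - ⟪gradient f x, v⟫‖ ≤ L * t * ‖v‖ ^ 2 := by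
    intro t ht
    calc ‖⟪gradient f (x + t • v), v⟫ - ⟪gradient f x, v⟫‖
        = ‖⟪gradient f (x + t • v) - gradient f x, v⟫‖ := by rw [inner_sub_left]
      _ ≤ ‖gradient f (x + t • v) - gradient f x‖ * ‖v‖ := norm_inner_le_norm _ _
      _ ≤ L * ‖t • v‖ * ‖v‖ := by
          gcongr
          simpa [dist_eq_norm] using hL.dist_le_mul (x + t • v) x
      _ = L * t * ‖v‖ ^ 2 := by rw [norm_smul, Real.norm_of_nonneg ht.1]; ring
  have hB : ∀ t : ℝ, HasDerivAt (fun s : ℝ => L / 2 * s ^ 2 * ‖v‖ ^ 2) (L * t * ‖v‖ ^ 2) t :=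
    fun t => (((hasDerivAt_pow 2 t).const_mul (L / 2 : ℝ)).mul_const (‖v‖ ^ 2)).congr_deriv
      (by push_cast; ring)
  simpa using image_norm_le_of_norm_deriv_right_le_deriv_boundary
    (fun t _ => (hderiv t).continuousAt.continuousWithinAt)
    (fun t _ => (hderiv t).hasDerivWithinAt) (by simp) hB hbound (right_mem_Icc.2 zero_le_one)

end InnerProductSpace

theorem stmt_3_general {k : ℕ} (ℓ : EuclideanSpace ℝ (Fin k) → ℝ) (hdiff : Differentiable ℝ ℓ)
    (Lc : NNReal) (hlip : LipschitzWith Lc (gradient ℓ))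
    (w : EuclideanSpace ℝ (Fin k)) (ρ : ℝ) (hρ : 0 < ρ) :
    sSup ((fun δ => ℓ (w + δ)) '' closedBall (0 : EuclideanSpace ℝ (Fin k)) ρ) -
      ℓ (w + ρ • (‖gradient ℓ w‖⁻¹ • gradient ℓ w)) ≤ (Lc : ℝ) * ρ ^ 2 := by
  set g := gradient ℓ w
  set u := ρ • (‖g‖⁻¹ • g)
  have hu : ‖u‖ ≤ ρ := norm_smul_inv_norm_smul_le g hρ.le
  have hlower := (abs_le.1 (abs_sub_sub_inner_gradient_le hdiff hlip w u)).1
  rw [sub_le_iff_le_add]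
  refine csSup_le ⟨ℓ (w + 0), 0, mem_closedBall_self hρ.le, rfl⟩ ?_
  rintro _ ⟨δ, hδ, rfl⟩
  rw [mem_closedBall_zero_iff] at hδ
  have hupper := (abs_le.1 (abs_sub_sub_inner_gradient_le hdiff hlip w δ)).2
  have hinner : ⟪g, δ⟫ ≤ ⟪g, u⟫ := real_inner_le_inner_smul_inv_norm_smul g hδ
  have hδ2 : (Lc : ℝ) / 2 * ‖δ‖ ^ 2 ≤ Lc / 2 * ρ ^ 2 := by gcongr
  have hu2 : (Lc : ℝ) / 2 * ‖u‖ ^ 2 ≤ Lc / 2 * ρ ^ 2 := by gcongr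
  linarith

theorem stmt_3 {k : ℕ} (ℓ : EuclideanSpace ℝ (Fin k) → ℝ) (hdiff : Differentiable ℝ ℓ)
    (Lc : NNReal) (hlip : LipschitzWith Lc (gradient ℓ))
    (w : EuclideanSpace ℝ (Fin k)) (ρ : ℝ) (hρ : 0 < ρ) (hg : gradient ℓ w ≠ 0) :
    sSup ((fun δ => ℓ (w + δ)) '' closedBall (0 : EuclideanSpace ℝ (Fin k)) ρ) -
      ℓ (w + ρ • (‖gradient ℓ w‖⁻¹ • gradient ℓ w)) ≤ (Lc : ℝ) * ρ ^ 2 :=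
  stmt_3_general ℓ hdiff Lc hlip w ρ hρ
end

section
/- Cosine similarity of perturbed gradients under Lipschitz Hessian: if ∇ℓ is L-Lipschitz and ‖∇ℓ(w)‖ = G > 2Lρ, then for any two points w₁, w₂ in the closed ball of radius ρ around w, the cosine similarity between ∇ℓ(w₁) and ∇ℓ(w₂) is at least 1 − 8L²ρ²/(G − Lρ)². -/
open Metric RealInnerProductSpace

theorem stmt_15 {k : ℕ} (ℓ : EuclideanSpace ℝ (Fin k) → ℝ) (hdiff : Differentiable ℝ ℓ)
    (Lc : ℝ) (hLc : 0 ≤ Lc) (hlip : LipschitzWith Lc.toNNReal (gradient ℓ))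
    (w : EuclideanSpace ℝ (Fin k)) (ρ : ℝ) (hρ : 0 ≤ ρ)
    (G : ℝ) (hG : G = ‖gradient ℓ w‖) (hbig : 2 * Lc * ρ < G)
    (w₁ w₂ : EuclideanSpace ℝ (Fin k))
    (hw₁ : w₁ ∈ closedBall w ρ) (hw₂ : w₂ ∈ closedBall w ρ) :
    1 - 8 * Lc ^ 2 * ρ ^ 2 / (G - Lc * ρ) ^ 2 ≤
      ⟪gradient ℓ w₁, gradient ℓ w₂⟫ / (‖gradient ℓ w₁‖ * ‖gradient ℓ w₂‖) := by
  set a := gradient ℓ w₁ with ha_def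
  set b := gradient ℓ w₂ with hb_def
  set g := gradient ℓ w with hg_def
  have ht : 0 ≤ Lc * ρ := mul_nonneg hLc hρ
  have hD : 0 < G - Lc * ρ := by nlinarith
  have hlip1 : dist a g ≤ Lc * ρ := by
    calc dist a g ≤ Lc.toNNReal * dist w₁ w := hlip.dist_le_mul w₁ w
    _ ≤ Lc * ρ := by
        rw [Real.coe_toNNReal Lc hLc]
        exact mul_le_mul_of_nonneg_left (mem_closedBall.mp hw₁) hLc
  have hlip2 : dist b g ≤ Lc * ρ := by
    calc dist b g ≤ Lc.toNNReal * dist w₂ w := hlip.dist_le_mul w₂ w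
    _ ≤ Lc * ρ := by
        rw [Real.coe_toNNReal Lc hLc]
        exact mul_le_mul_of_nonneg_left (mem_closedBall.mp hw₂) hLc
  rw [dist_eq_norm] at hlip1 hlip2
  have ha : G - Lc * ρ ≤ ‖a‖ := by
    have := norm_sub_norm_le g a
    rw [← neg_sub a g, norm_neg] at this
    rw [hG] at *
    linarith
  have hb : G - Lc * ρ ≤ ‖b‖ := by
    have := norm_sub_norm_le g b
    rw [← neg_sub b g, norm_neg] at this
    rw [hG] at *
    linarith
  have hab : ‖a - b‖ ≤ 2 * (Lc * ρ) := by
    calc ‖a - b‖ = ‖(a - g) - (b - g)‖ := by abel_nf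
    _ ≤ ‖a - g‖ + ‖b - g‖ := norm_sub_le _ _
    _ ≤ 2 * (Lc * ρ) := by linarith
  have hP : 0 < ‖a‖ * ‖b‖ := mul_pos (lt_of_lt_of_le hD ha) (lt_of_lt_of_le hD hb)
  have hinner : ‖a - b‖ ^ 2 = ‖a‖ ^ 2 - 2 * ⟪a, b⟫ + ‖b‖ ^ 2 := norm_sub_sq_real a b
  have hnum : ‖a‖ * ‖b‖ - 2 * (Lc * ρ) ^ 2 ≤ ⟪a, b⟫ := by
    nlinarith [sq_nonneg (‖a‖ - ‖b‖), norm_nonneg (a - b)]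
  have e3 : 1 - 2 * (Lc * ρ) ^ 2 / (‖a‖ * ‖b‖) ≤ ⟪a, b⟫ / (‖a‖ * ‖b‖) := by
    rw [← div_self hP.ne', ← sub_div]
    exact (div_le_div_iff_of_pos_right hP).mpr hnum
  have hDsq : (G - Lc * ρ) ^ 2 ≤ ‖a‖ * ‖b‖ := by nlinarith
  have e2 : 1 - 2 * (Lc * ρ) ^ 2 / (G - Lc * ρ) ^ 2 ≤
      1 - 2 * (Lc * ρ) ^ 2 / (‖a‖ * ‖b‖) := by
    gcongr
  have e1 : 1 - 8 * Lc ^ 2 * ρ ^ 2 / (G - Lc * ρ) ^ 2 ≤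
      1 - 2 * (Lc * ρ) ^ 2 / (G - Lc * ρ) ^ 2 := by
    have h28 : 2 * (Lc * ρ) ^ 2 ≤ 8 * Lc ^ 2 * ρ ^ 2 := by nlinarith [sq_nonneg (Lc * ρ)]
    have hD2 : 0 < (G - Lc * ρ) ^ 2 := by positivity
    have := (div_le_div_iff_of_pos_right hD2).mpr h28
    linarith
  linarith
end

section
/- Two-step ascent direction for quadratic loss: for ℓ(w) = ½⟨w, A w⟩ with A symmetric PSD and w₀ not in the kernel of A, the two-step ascent direction v₂ (obtained by two normalized gradient steps of size ρ/2 and renormalizing the total displacement to length ρ) satisfies ℓ(w₀ + ρ v₂) ≥ ℓ(w₀ + ρ v₁) where v₁ = A w₀/‖A w₀‖ is the single-step direction. -/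
/-!
Write `Q x = ⟪x, A x⟫`, `s = ρ / 2` and `a = A w₀`, so that `w₀ + ρ v₁ = w₁ + s v₁` and
`w₀ + d = w₁ + s u₂`. From `w₁`, a step `s x` changes `Q` by `2 s ⟪A w₁, x⟫ + s² Q x`. Over unit
vectors the first term is maximised by the normalised gradient `u₂`, and `Q u₂ ≥ Q v₁` because
`A w₁ = a + c A a` with `c ≥ 0` and the Rayleigh quotient does not decrease along `x ↦ x + c A x`;
this follows from the moment inequalities `m₁² ≤ m₀ m₂` and `m₂² ≤ m₁ m₃` for `mⱼ = ⟪a, Aʲ a⟫`.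
Finally `‖d‖ ≤ ρ` and `⟪a, d⟫ ≥ 0`, so stretching `d` to length `ρ` can only increase `Q`.
-/

open RealInnerProductSpace

namespace LinearMap

variable {E : Type*} [NormedAddCommGroup E] [InnerProductSpace ℝ E] {T : E →ₗ[ℝ] E}

theorem IsSymmetric.inner_add_apply_add (hT : T.IsSymmetric) (w v : E) :
    ⟪w + v, T (w + v)⟫ = ⟪w, T w⟫ + 2 * ⟪T w, v⟫ + ⟪v, T v⟫ := by
  have hvw : ⟪v, T w⟫ = ⟪T w, v⟫ := real_inner_comm _ _
  have hwv : ⟪w, T v⟫ = ⟪T w, v⟫ := (hT w v).symm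
  rw [map_add, inner_add_left, inner_add_right, inner_add_right, hvw, hwv]
  ring

theorem inner_smul_apply_smul (T : E →ₗ[ℝ] E) (r : ℝ) (x : E) :
    ⟪r • x, T (r • x)⟫ = r ^ 2 * ⟪x, T x⟫ := by
  rw [map_smul, real_inner_smul_left, real_inner_smul_right]
  ring

theorem IsSymmetric.inner_add_smul_apply_le (hT : T.IsSymmetric) (w : E) {s : ℝ} (hs : 0 ≤ s)
    {v : E} (hv : ‖v‖ ≤ 1) (hcurv : ⟪v, T v⟫ ≤ ⟪‖T w‖⁻¹ • T w, T (‖T w‖⁻¹ • T w)⟫) :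
    ⟪w + s • v, T (w + s • v)⟫ ≤
      ⟪w + s • (‖T w‖⁻¹ • T w), T (w + s • (‖T w‖⁻¹ • T w))⟫ := by
  have hgrad : ⟪T w, v⟫ ≤ ⟪T w, ‖T w‖⁻¹ • T w⟫ := by
    rcases eq_or_ne (T w) 0 with h | h
    · simp [h]
    rw [real_inner_smul_right, real_inner_self_eq_norm_sq, sq, ← mul_assoc,
      inv_mul_cancel₀ (norm_ne_zero_iff.mpr h), one_mul]
    exact (real_inner_le_norm _ _).trans (mul_le_of_le_one_right (norm_nonneg _) hv)
  rw [hT.inner_add_apply_add, hT.inner_add_apply_add, T.inner_smul_apply_smul,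
    T.inner_smul_apply_smul, real_inner_smul_right, real_inner_smul_right]
  nlinarith [mul_le_mul_of_nonneg_left hgrad hs, mul_le_mul_of_nonneg_left hcurv (sq_nonneg s)]

namespace IsPositive

theorem inner_apply_sq_le (hT : T.IsPositive) (x y : E) :
    ⟪x, T y⟫ ^ 2 ≤ ⟪x, T x⟫ * ⟪y, T y⟫ := by
  have hquad : ∀ t : ℝ, 0 ≤ ⟪y, T y⟫ * (t * t) + 2 * ⟪x, T y⟫ * t + ⟪x, T x⟫ := by
    intro t
    have h := hT.inner_nonneg_right (x + t • y)
    rw [hT.isSymmetric.inner_add_apply_add, T.inner_smul_apply_smul,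
      real_inner_smul_right, hT.isSymmetric] at h
    linarith
  have h := discrim_le_zero hquad
  rw [discrim] at h
  nlinarith

/-- The moment inequality `m₁ m₂ ≤ m₀ m₃` for `mₖ = ⟪x, Tᵏ x⟫`, obtained by combining
`m₁² ≤ m₀ m₂` with `m₂² ≤ m₁ m₃`. -/
theorem inner_apply_mul_inner_apply_le (hT : T.IsPositive) (x : E) :
    ⟪x, T x⟫ * ⟪T x, T x⟫ ≤ ‖x‖ ^ 2 * ⟪T x, T (T x)⟫ := by
  have h01 : ⟪x, T x⟫ ^ 2 ≤ ‖x‖ ^ 2 * ⟪T x, T x⟫ := by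
    rw [sq, ← real_inner_self_eq_norm_sq]; exact real_inner_mul_inner_self_le x (T x)
  have h12 : ⟪T x, T x⟫ ^ 2 ≤ ⟪x, T x⟫ * ⟪T x, T (T x)⟫ := by
    simpa only [← hT.isSymmetric x (T x)] using hT.inner_apply_sq_le x (T x)
  have hm₁ := hT.inner_nonneg_right x
  have hm₃ := hT.inner_nonneg_right (T x)
  rcases (mul_nonneg hm₁ (real_inner_self_nonneg (x := T x))).eq_or_lt with h | h
  · rw [← h]; positivity
  refine le_of_mul_le_mul_right ?_ h
  nlinarith [mul_le_mul_of_nonneg_left h12 (mul_nonneg hm₁ hm₁),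
    mul_le_mul_of_nonneg_right h01 (mul_nonneg hm₁ hm₃)]

/-- The Rayleigh quotient does not decrease along `x ↦ x + c • T x` for `c ≥ 0`. -/
theorem inner_apply_mul_norm_sq_le (hT : T.IsPositive) (x : E) {c : ℝ} (hc : 0 ≤ c) :
    ⟪x, T x⟫ * ‖x + c • T x‖ ^ 2 ≤ ‖x‖ ^ 2 * ⟪x + c • T x, T (x + c • T x)⟫ := by
  have hnorm : ‖x + c • T x‖ ^ 2 = ‖x‖ ^ 2 + 2 * c * ⟪x, T x⟫ + c ^ 2 * ‖T x‖ ^ 2 := by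
    rw [norm_add_sq_real, norm_smul, mul_pow, Real.norm_eq_abs, sq_abs, real_inner_smul_right]
    ring
  have hquad : ⟪x + c • T x, T (x + c • T x)⟫ =
      ⟪x, T x⟫ + 2 * c * ‖T x‖ ^ 2 + c ^ 2 * ⟪T x, T (T x)⟫ := by
    rw [hT.isSymmetric.inner_add_apply_add, T.inner_smul_apply_smul, real_inner_smul_right,
      real_inner_self_eq_norm_sq]
    ring
  have h01 : ⟪x, T x⟫ ^ 2 ≤ ‖x‖ ^ 2 * ‖T x‖ ^ 2 := by
    rw [← mul_pow]; exact pow_le_pow_left₀ (hT.inner_nonneg_right x) (real_inner_le_norm _ _) 2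
  have h12 := hT.inner_apply_mul_inner_apply_le x
  rw [real_inner_self_eq_norm_sq] at h12
  rw [hnorm, hquad]
  nlinarith [mul_le_mul_of_nonneg_left h12 (sq_nonneg c), mul_le_mul_of_nonneg_left h01 hc]

theorem inner_smul_apply_smul_le_inner_smul_apply_smul (hT : T.IsPositive) (x : E) {c : ℝ}
    (hc : 0 ≤ c) (hx : x ≠ 0) (hy : x + c • T x ≠ 0) :
    ⟪‖x‖⁻¹ • x, T (‖x‖⁻¹ • x)⟫ ≤
      ⟪‖x + c • T x‖⁻¹ • (x + c • T x), T (‖x + c • T x‖⁻¹ • (x + c • T x))⟫ := by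
  rw [T.inner_smul_apply_smul, T.inner_smul_apply_smul, inv_pow, inv_pow, inv_mul_eq_div,
    inv_mul_eq_div, div_le_div_iff₀ (by positivity) (by positivity)]
  linarith [hT.inner_apply_mul_norm_sq_le x hc]

theorem inner_add_apply_add_le_of_norm_le (hT : T.IsPositive) (w : E) {d : E}
    (hslope : 0 ≤ ⟪T w, d⟫) {r : ℝ} (hr : ‖d‖ ≤ r) :
    ⟪w + d, T (w + d)⟫ ≤ ⟪w + r • ‖d‖⁻¹ • d, T (w + r • ‖d‖⁻¹ • d)⟫ := by
  rcases eq_or_ne d 0 with rfl | hd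
  · simp
  have ht : 1 ≤ r * ‖d‖⁻¹ := by
    rw [← div_eq_mul_inv]; exact (one_le_div (norm_pos_iff.mpr hd)).mpr hr
  rw [smul_smul, hT.isSymmetric.inner_add_apply_add, hT.isSymmetric.inner_add_apply_add,
    T.inner_smul_apply_smul, real_inner_smul_right]
  have hQ := hT.inner_nonneg_right d
  nlinarith [mul_nonneg (sub_nonneg.mpr ht) hslope, mul_nonneg (sub_nonneg.mpr ht) hQ]

theorem twoStep_ascent (hT : T.IsPositive) {w₀ : E} (hw₀ : T w₀ ≠ 0)
    {ρ : ℝ} (hρ : 0 < ρ) {v₁ w₁ u₂ d : E} (hv₁ : v₁ = ‖T w₀‖⁻¹ • T w₀)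
    (hw₁ : w₁ = w₀ + (ρ / 2) • v₁) (hTw₁ : T w₁ ≠ 0) (hu₂ : u₂ = ‖T w₁‖⁻¹ • T w₁)
    (hd : d = (ρ / 2) • v₁ + (ρ / 2) • u₂) :
    ⟪w₀ + ρ • v₁, T (w₀ + ρ • v₁)⟫ ≤ ⟪w₀ + ρ • ‖d‖⁻¹ • d, T (w₀ + ρ • ‖d‖⁻¹ • d)⟫ := by
  have hs : 0 ≤ ρ / 2 := by positivity
  have hTw₁_eq : T w₁ = T w₀ + (ρ / 2 * ‖T w₀‖⁻¹) • T (T w₀) := by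
    rw [hw₁, hv₁, map_add, map_smul, map_smul, smul_smul]
  have hcurv : ⟪v₁, T v₁⟫ ≤ ⟪u₂, T u₂⟫ := by
    rw [hv₁, hu₂, hTw₁_eq]
    exact hT.inner_smul_apply_smul_le_inner_smul_apply_smul _ (by positivity) hw₀
      (hTw₁_eq ▸ hTw₁)
  have hv₁_norm : ‖v₁‖ = 1 := hv₁ ▸ norm_smul_inv_norm hw₀
  have hu₂_norm : ‖u₂‖ = 1 := hu₂ ▸ norm_smul_inv_norm hTw₁
  have hd_norm : ‖d‖ ≤ ρ := by
    calc ‖d‖ ≤ ‖(ρ / 2) • v₁‖ + ‖(ρ / 2) • u₂‖ := hd ▸ norm_add_le _ _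
      _ = ρ := by
        rw [norm_smul, norm_smul, hv₁_norm, hu₂_norm, Real.norm_of_nonneg hs]
        ring
  have hslope : 0 ≤ ⟪T w₀, d⟫ := by
    have hgrad : 0 ≤ ⟪T w₀, T w₁⟫ := by
      rw [hTw₁_eq, inner_add_right, real_inner_smul_right, real_inner_self_eq_norm_sq]
      exact add_nonneg (sq_nonneg _) (mul_nonneg (by positivity) (hT.inner_nonneg_right _))
    rw [hd, hu₂, hv₁, inner_add_right, real_inner_smul_right, real_inner_smul_right,
      real_inner_smul_right, real_inner_smul_right, real_inner_self_eq_norm_sq]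
    positivity
  calc ⟪w₀ + ρ • v₁, T (w₀ + ρ • v₁)⟫ = ⟪w₁ + (ρ / 2) • v₁, T (w₁ + (ρ / 2) • v₁)⟫ := by
        rw [hw₁, add_assoc, ← add_smul, add_halves]
    _ ≤ ⟪w₁ + (ρ / 2) • u₂, T (w₁ + (ρ / 2) • u₂)⟫ := by
        rw [hu₂]
        exact hT.isSymmetric.inner_add_smul_apply_le w₁ hs hv₁_norm.le (hu₂ ▸ hcurv)
    _ = ⟪w₀ + d, T (w₀ + d)⟫ := by rw [hw₁, hd, add_assoc]
    _ ≤ _ := hT.inner_add_apply_add_le_of_norm_le w₀ hslope hd_norm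

end IsPositive

end LinearMap

theorem stmt_17_general {k : ℕ} (A : Matrix (Fin k) (Fin k) ℝ)
    (hpsd : A.PosSemidef)
    (f : EuclideanSpace ℝ (Fin k) → ℝ)
    (hf : f = fun x => (1 / 2 : ℝ) * ⟪x, Matrix.toEuclideanLin A x⟫)
    (w₀ : EuclideanSpace ℝ (Fin k)) (hw₀ : Matrix.toEuclideanLin A w₀ ≠ 0)
    (ρ : ℝ) (hρ : 0 < ρ)
    (v₁ : EuclideanSpace ℝ (Fin k))
    (hv₁ : v₁ = ‖Matrix.toEuclideanLin A w₀‖⁻¹ • Matrix.toEuclideanLin A w₀)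
    (w₁ : EuclideanSpace ℝ (Fin k)) (hw₁ : w₁ = w₀ + (ρ / 2) • v₁)
    (hA₁ : Matrix.toEuclideanLin A w₁ ≠ 0)
    (u₂ : EuclideanSpace ℝ (Fin k))
    (hu₂ : u₂ = ‖Matrix.toEuclideanLin A w₁‖⁻¹ • Matrix.toEuclideanLin A w₁)
    (d v₂ : EuclideanSpace ℝ (Fin k))
    (hd : d = (ρ / 2) • v₁ + (ρ / 2) • u₂)
    (hv₂ : v₂ = ‖d‖⁻¹ • d) :
    f (w₀ + ρ • v₁) ≤ f (w₀ + ρ • v₂) := by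
  have hT : (Matrix.toEuclideanLin A).IsPositive := Matrix.isPositive_toEuclideanLin_iff.mpr hpsd
  subst hf hv₂
  dsimp only
  gcongr
  exact hT.twoStep_ascent hw₀ hρ hv₁ hw₁ hA₁ hu₂ hd

theorem stmt_17 {k : ℕ} (A : Matrix (Fin k) (Fin k) ℝ)
    (hsymm : A.IsSymm) (hpsd : A.PosSemidef)
    (f : EuclideanSpace ℝ (Fin k) → ℝ)
    (hf : f = fun x => (1 / 2 : ℝ) * ⟪x, Matrix.toEuclideanLin A x⟫)
    (w₀ : EuclideanSpace ℝ (Fin k)) (hw₀ : Matrix.toEuclideanLin A w₀ ≠ 0)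
    (ρ : ℝ) (hρ : 0 < ρ)
    (v₁ : EuclideanSpace ℝ (Fin k))
    (hv₁ : v₁ = ‖Matrix.toEuclideanLin A w₀‖⁻¹ • Matrix.toEuclideanLin A w₀)
    (w₁ : EuclideanSpace ℝ (Fin k)) (hw₁ : w₁ = w₀ + (ρ / 2) • v₁)
    (hA₁ : Matrix.toEuclideanLin A w₁ ≠ 0)
    (u₂ : EuclideanSpace ℝ (Fin k))
    (hu₂ : u₂ = ‖Matrix.toEuclideanLin A w₁‖⁻¹ • Matrix.toEuclideanLin A w₁)
    (d v₂ : EuclideanSpace ℝ (Fin k))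
    (hd : d = (ρ / 2) • v₁ + (ρ / 2) • u₂)
    (hv₂ : v₂ = ‖d‖⁻¹ • d) :
    f (w₀ + ρ • v₁) ≤ f (w₀ + ρ • v₂) :=
  stmt_17_general A hpsd f hf w₀ hw₀ ρ hρ v₁ hv₁ w₁ hw₁ hA₁ u₂ hu₂ d v₂ hd hv₂
end
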